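/- Let S be the unique formal power series over ℚ with zero constant term satisfying S = t(1+2S)(1+S), and set R = S + t(1+S) and Q = (2−2t)S − t. Then as formal power series: 2t·(1 + R²) = (1−t)²·R and t·(1 + Q²) = (1 − 4t + t²)·Q. -/

import Mathlib

section

variable {A : Type*} [CommRing A] {t S : A}

theorem two_mul_one_add_sq_eq_of_eq_mul_mul (h : S = t * (1 + 2 * S) * (1 + S)) :
    2 * t * (1 + (S + t * (1 + S)) ^ 2) = (1 - t) ^ 2 * (S + t * (1 + S)) := by
  linear_combination (-(1 + t) ^ 2) * h

theorem mul_one_add_sq_eq_of_eq_mul_mul (h : S = t * (1 + 2 * S) * (1 + S)) :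
    t * (1 + ((2 - 2 * t) * S - t) ^ 2) = (1 - 4 * t + t ^ 2) * ((2 - 2 * t) * S - t) := by
  linear_combination (-2 * (1 - t) ^ 2) * h

end

open PowerSeries in
theorem R_Q_algebraic_equations (S R Q : PowerSeries ℚ)
    (hS : S = X * (1 + 2 * S) * (1 + S))
    (hR : R = S + X * (1 + S))
    (hQ : Q = (2 - 2 * X) * S - X) :
    2 * X * (1 + R ^ 2) = (1 - X) ^ 2 * R ∧
    X * (1 + Q ^ 2) = (1 - 4 * X + X ^ 2) * Q := by
  subst hR hQ
  exact ⟨two_mul_one_add_sq_eq_of_eq_mul_mul hS, mul_one_add_sq_eq_of_eq_mul_mul hS⟩
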